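/- Let A' ⊆ A be an inclusion of commutative Noetherian rings graded by the nonnegative integers, compatible with the gradings, such that A'₀ and A₀ are local rings, the maximal ideal of A'₀ maps into the maximal ideal of A₀, and A is finite as an A'-module. Let m̃' ⊆ A' (respectively m̃ ⊆ A) be the maximal ideal generated by the maximal ideal of the degree-zero part together with all homogeneous elements of positive degree. Then m̃ is the unique prime ideal of A lying over m̃'; consequently, for any finitely generated A-module N, the localization of N at m̃' as an A'-module coincides with its localization at m̃ as an A-module. -/

import Mathlib

/-!
The map `A'₀ → A₀` induced on degree-zero parts is finite, hence integral, so a prime of `A₀`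
lies over the maximal ideal of `A'₀` only if it is maximal. This shows that `m̃` lies over `m̃'`
and that every prime `p` over `m̃'` contains the degree-zero generators of `m̃`. A homogeneous
`x` of positive degree `k` is integral over `A'`; the component of degree `n k` of an integral
equation of degree `n` expresses `x ^ n` through elements of `A'` of positive degree, which lie
in `m̃'`, so `x ∈ p`. Thus `p` contains, hence equals, the maximal ideal `m̃`.

Since `m̃` is the only prime over `m̃'`, going up shows that no prime avoiding `A' ∖ m̃'` can
contain an element `s ∉ m̃`: every such `s` divides an element of `A' ∖ m̃'`. Inverting
`A' ∖ m̃'` therefore already inverts `A ∖ m̃`.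
-/

/-- For a commutative ring `B` graded by the nonnegative integers whose degree-zero part
`B₀ = 𝒝 0` is a local ring, this is the ('irrelevant') maximal ideal of `B` generated by
the maximal ideal of `B₀` together with all homogeneous elements of positive degree. -/
def gradedIrrelevantMaximalIdeal (B : Type) [CommRing B] (𝒝 : ℕ → AddSubgroup B)
    [GradedRing 𝒝] [IsLocalRing (𝒝 0)] : Ideal B :=
  Ideal.span
    ((Subtype.val '' ((IsLocalRing.maximalIdeal (𝒝 0) : Ideal (𝒝 0)) : Set (𝒝 0))) ∪
      ⋃ k ∈ {k : ℕ | 0 < k}, (𝒝 k : Set B))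

open DirectSum IsLocalRing

section Irrelevant

variable {B : Type} [CommRing B] (𝒝 : ℕ → AddSubgroup B) [GradedRing 𝒝]

theorem mem_gradedIrrelevantMaximalIdeal_of_mem [IsLocalRing (𝒝 0)] {k : ℕ} (hk : 0 < k)
    {x : B} (hx : x ∈ 𝒝 k) : x ∈ gradedIrrelevantMaximalIdeal B 𝒝 :=
  Ideal.subset_span (Or.inr (Set.mem_biUnion hk hx))

theorem gradedIrrelevantMaximalIdeal_eq_comap [IsLocalRing (𝒝 0)] :
    gradedIrrelevantMaximalIdeal B 𝒝 =
      (maximalIdeal (𝒝 0)).comap (GradedRing.projZeroRingHom' 𝒝) := by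
  apply le_antisymm
  · rw [gradedIrrelevantMaximalIdeal, Ideal.span_le]
    rintro x (⟨y, hy, rfl⟩ | hx)
    · simpa using hy
    · obtain ⟨k, hk, hxk⟩ := by simpa only [Set.mem_iUnion] using hx
      have : GradedRing.projZeroRingHom' 𝒝 x = 0 :=
        Subtype.ext (decompose_of_mem_ne 𝒝 hxk (Nat.pos_iff_ne_zero.mp hk))
      simp [this]
  · intro x hx
    classical
    rw [← sum_support_decompose 𝒝 x]
    refine Ideal.sum_mem _ fun i _ => ?_
    rcases Nat.eq_zero_or_pos i with rfl | hi
    · exact Ideal.subset_span (Or.inl ⟨decompose 𝒝 x 0, hx, rfl⟩)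
    · exact mem_gradedIrrelevantMaximalIdeal_of_mem 𝒝 hi (SetLike.coe_mem _)

theorem gradedIrrelevantMaximalIdeal_isMaximal [IsLocalRing (𝒝 0)] :
    (gradedIrrelevantMaximalIdeal B 𝒝).IsMaximal := by
  rw [gradedIrrelevantMaximalIdeal_eq_comap]
  exact Ideal.comap_isMaximal_of_surjective _ (GradedRing.projZeroRingHom'_surjective 𝒝)

theorem comap_algebraMap_gradedIrrelevantMaximalIdeal [IsLocalRing (𝒝 0)] :
    (gradedIrrelevantMaximalIdeal B 𝒝).comap (algebraMap (𝒝 0) B) = maximalIdeal (𝒝 0) := by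
  ext y
  rw [gradedIrrelevantMaximalIdeal_eq_comap, Ideal.mem_comap, Ideal.mem_comap,
    SetLike.GradeZero.algebraMap_apply, GradedRing.projZeroRingHom'_apply_coe]

end Irrelevant

section GradedAlgebraMap

variable {A' A : Type} [CommRing A'] [CommRing A] [Algebra A' A]
  {𝒜' : ℕ → AddSubgroup A'} [GradedRing 𝒜'] {𝒜 : ℕ → AddSubgroup A} [GradedRing 𝒜]

theorem decompose_algebraMap (hcompat : ∀ (k : ℕ) (a : A'), a ∈ 𝒜' k → algebraMap A' A a ∈ 𝒜 k)
    (a : A') (k : ℕ) :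
    (decompose 𝒜 (algebraMap A' A a) k : A) = algebraMap A' A (decompose 𝒜' a k) := by
  induction a using DirectSum.Decomposition.inductionOn 𝒜' with
  | zero => simp
  | @homogeneous j x =>
    rw [decompose_coe]
    by_cases h : k = j
    · subst h
      rw [decompose_of_mem_same 𝒜 (hcompat k x x.2), of_eq_same]
    · rw [decompose_of_mem_ne 𝒜 (hcompat j x x.2) (Ne.symm h), of_eq_of_ne _ _ _ h,
        ZeroMemClass.coe_zero, map_zero]
  | add x y hx hy =>
    simp only [map_add, decompose_add, DirectSum.add_apply, AddMemClass.coe_add, hx, hy]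

def gradeZeroAlgebraMap (hcompat : ∀ (k : ℕ) (a : A'), a ∈ 𝒜' k → algebraMap A' A a ∈ 𝒜 k) :
    𝒜' 0 →+* 𝒜 0 :=
  ((algebraMap A' A).comp (algebraMap (𝒜' 0) A')).codRestrict
    (SetLike.GradeZero.subring 𝒜) fun a => hcompat 0 a a.2

theorem projZeroRingHom'_comp_algebraMap
    (hcompat : ∀ (k : ℕ) (a : A'), a ∈ 𝒜' k → algebraMap A' A a ∈ 𝒜 k) :
    (GradedRing.projZeroRingHom' 𝒜).comp (algebraMap A' A) =
      (gradeZeroAlgebraMap hcompat).comp (GradedRing.projZeroRingHom' 𝒜') :=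
  RingHom.ext fun a => Subtype.ext (decompose_algebraMap hcompat a 0)

theorem gradeZeroAlgebraMap_finite [Module.Finite A' A]
    (hcompat : ∀ (k : ℕ) (a : A'), a ∈ 𝒜' k → algebraMap A' A a ∈ 𝒜 k) :
    (gradeZeroAlgebraMap hcompat).Finite := by
  refine RingHom.Finite.of_comp_finite (f := GradedRing.projZeroRingHom' 𝒜') ?_
  rw [← projZeroRingHom'_comp_algebraMap]
  exact (RingHom.Finite.of_surjective _ (GradedRing.projZeroRingHom'_surjective 𝒜)).comp
    (RingHom.finite_algebraMap.mpr ‹_›)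

theorem exists_pow_mem_of_isIntegral
    (hcompat : ∀ (k : ℕ) (a : A'), a ∈ 𝒜' k → algebraMap A' A a ∈ 𝒜 k)
    {I : Ideal A} (hI : ∀ j, 0 < j → ∀ a ∈ 𝒜' j, algebraMap A' A a ∈ I)
    {k : ℕ} (hk : 0 < k) {x : A} (hx : x ∈ 𝒜 k) (hint : IsIntegral A' x) :
    ∃ n, x ^ n ∈ I := by
  obtain ⟨P, hmonic, hP⟩ := hint
  refine ⟨P.natDegree, ?_⟩
  have hpow (i : ℕ) : x ^ i ∈ 𝒜 (i * k) := by
    simpa only [smul_eq_mul] using SetLike.pow_mem_graded i hx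
  have hterm (i : ℕ) (hi : i ≤ P.natDegree) :
      (decompose 𝒜 (P.coeff i • x ^ i) (P.natDegree * k) : A) =
        algebraMap A' A (decompose 𝒜' (P.coeff i) ((P.natDegree - i) * k)) * x ^ i := by
    rw [Algebra.smul_def, coe_decompose_mul_of_right_mem_of_le 𝒜 (hpow i)
      (Nat.mul_le_mul_right k hi), ← Nat.sub_mul, decompose_algebraMap hcompat]
  have hsum : (decompose 𝒜 (Polynomial.aeval x P) (P.natDegree * k) : A) = 0 := by
    rw [Polynomial.aeval_def, hP, decompose_zero, DirectSum.zero_apply, ZeroMemClass.coe_zero]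
  rw [Polynomial.aeval_eq_sum_range, decompose_sum, DFinsupp.finsetSum_apply,
    AddSubmonoidClass.coe_finsetSum, Finset.sum_range_succ, hmonic.coeff_natDegree, one_smul,
    decompose_of_mem_same 𝒜 (hpow _)] at hsum
  rw [eq_neg_of_add_eq_zero_right hsum]
  refine neg_mem (Ideal.sum_mem _ fun i hi => ?_)
  have hi : i < P.natDegree := Finset.mem_range.mp hi
  rw [hterm i hi.le]
  exact Ideal.mul_mem_right _ _ (hI _ (Nat.mul_pos (Nat.sub_pos_of_lt hi) hk) _ (SetLike.coe_mem _))

variable [IsLocalRing (𝒜' 0)] [IsLocalRing (𝒜 0)] [Module.Finite A' A]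

theorem comap_gradeZeroAlgebraMap_maximalIdeal
    (hcompat : ∀ (k : ℕ) (a : A'), a ∈ 𝒜' k → algebraMap A' A a ∈ 𝒜 k) :
    (maximalIdeal (𝒜 0)).comap (gradeZeroAlgebraMap hcompat) = maximalIdeal (𝒜' 0) :=
  eq_maximalIdeal <| Ideal.isMaximal_comap_of_isIntegral_of_isMaximal' _
    (gradeZeroAlgebraMap_finite hcompat).to_isIntegral _

theorem eq_maximalIdeal_of_comap_gradeZeroAlgebraMap
    (hcompat : ∀ (k : ℕ) (a : A'), a ∈ 𝒜' k → algebraMap A' A a ∈ 𝒜 k)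
    (q : Ideal (𝒜 0)) [q.IsPrime]
    (hq : q.comap (gradeZeroAlgebraMap hcompat) = maximalIdeal (𝒜' 0)) :
    q = maximalIdeal (𝒜 0) :=
  eq_maximalIdeal <| Ideal.isMaximal_of_isIntegral_of_isMaximal_comap' _
    (gradeZeroAlgebraMap_finite hcompat).to_isIntegral q (hq ▸ inferInstance)

theorem comap_gradedIrrelevantMaximalIdeal
    (hcompat : ∀ (k : ℕ) (a : A'), a ∈ 𝒜' k → algebraMap A' A a ∈ 𝒜 k) :
    (gradedIrrelevantMaximalIdeal A 𝒜).comap (algebraMap A' A) =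
      gradedIrrelevantMaximalIdeal A' 𝒜' := by
  rw [gradedIrrelevantMaximalIdeal_eq_comap, gradedIrrelevantMaximalIdeal_eq_comap,
    Ideal.comap_comap, projZeroRingHom'_comp_algebraMap hcompat, ← Ideal.comap_comap,
    comap_gradeZeroAlgebraMap_maximalIdeal]

theorem eq_gradedIrrelevantMaximalIdeal_of_comap_eq
    (hcompat : ∀ (k : ℕ) (a : A'), a ∈ 𝒜' k → algebraMap A' A a ∈ 𝒜 k)
    (p : Ideal A) [p.IsPrime]
    (hp : p.comap (algebraMap A' A) = gradedIrrelevantMaximalIdeal A' 𝒜') :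
    p = gradedIrrelevantMaximalIdeal A 𝒜 := by
  refine ((gradedIrrelevantMaximalIdeal_isMaximal 𝒜).eq_of_le Ideal.IsPrime.ne_top' ?_).symm
  rw [gradedIrrelevantMaximalIdeal, Ideal.span_le]
  rintro x (⟨y, hy, rfl⟩ | hx)
  · have hq : (p.comap (algebraMap (𝒜 0) A)).comap (gradeZeroAlgebraMap hcompat) =
        maximalIdeal (𝒜' 0) := by
      rw [Ideal.comap_comap, show (algebraMap (𝒜 0) A).comp (gradeZeroAlgebraMap hcompat) =
        (algebraMap A' A).comp (algebraMap (𝒜' 0) A') from rfl, ← Ideal.comap_comap, hp,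
        comap_algebraMap_gradedIrrelevantMaximalIdeal]
    rw [← eq_maximalIdeal_of_comap_gradeZeroAlgebraMap hcompat _ hq] at hy
    exact hy
  · obtain ⟨k, hk, hxk⟩ := by simpa only [Set.mem_iUnion] using hx
    have hI (j : ℕ) (hj : 0 < j) (a : A') (ha : a ∈ 𝒜' j) : algebraMap A' A a ∈ p := by
      rw [← Ideal.mem_comap, hp]
      exact mem_gradedIrrelevantMaximalIdeal_of_mem 𝒜' hj ha
    obtain ⟨n, hn⟩ := exists_pow_mem_of_isIntegral hcompat hI hk hxk
      (Algebra.IsIntegral.isIntegral x)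
    exact Ideal.IsPrime.mem_of_pow_mem ‹_› n hn

end GradedAlgebraMap

theorem exists_algebraMap_eq_mul_of_notMem {R S : Type*} [CommRing R] [CommRing S] [Algebra R S]
    [Algebra.IsIntegral R S] {P : Ideal R} [P.IsPrime] {Q : Ideal S}
    (hQ : ∀ q : Ideal S, q.IsPrime → q.comap (algebraMap R S) = P → q = Q) {s : S}
    (hs : s ∉ Q) : ∃ r ∉ P, ∃ t, algebraMap R S r = s * t := by
  by_contra! h
  have hdisj : Disjoint (Ideal.span {s} : Set S) (Algebra.algebraMapSubmonoid S P.primeCompl) := by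
    rw [Set.disjoint_left]
    rintro _ hsa ⟨r, hr, rfl⟩
    obtain ⟨t, ht⟩ := Ideal.mem_span_singleton.mp hsa
    exact h r hr t ht
  obtain ⟨p, hp, hsp, hpdisj⟩ := Ideal.exists_le_prime_disjoint _ _ hdisj
  have hle : p.comap (algebraMap R S) ≤ P := fun r hr =>
    by_contra fun hrP => Set.disjoint_left.mp hpdisj hr ⟨r, hrP, rfl⟩
  obtain ⟨q, hpq, hq, hqP⟩ := Ideal.exists_ideal_over_prime_of_isIntegral_of_isPrime P p hle
  exact hs (hQ q hq hqP ▸ hpq (hsp (Ideal.mem_span_singleton_self s)))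

namespace LocalizedModule

variable {R S : Type*} [CommRing R] [CommRing S] [Algebra R S] {T : Submonoid R} {M : Submonoid S}
  {N : Type*} [AddCommGroup N] [Module S N]

theorem bijective_smul_of_mem {s : S} (hs : s ∈ M) :
    Function.Bijective fun x : LocalizedModule M N => s • x :=
  (Module.End.isUnit_iff _).mp (IsLocalizedModule.map_units (mkLinearMap M N) ⟨s, hs⟩)

theorem exists_algebraMap_smul_eq_mkLinearMap
    (hM : ∀ s ∈ M, ∃ r ∈ T, ∃ t, algebraMap R S r = s * t) (x : LocalizedModule M N) :
    ∃ (v : N) (r : R), r ∈ T ∧ algebraMap R S r • x = mkLinearMap M N v := by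
  induction x using LocalizedModule.induction_on with
  | h v s =>
    obtain ⟨r, hr, t, hrt⟩ := hM s s.2
    refine ⟨t • v, r, hr, ?_⟩
    rw [mkLinearMap_apply, smul'_mk, hrt, mul_smul, ← Submonoid.smul_def, mk_cancel]

theorem exists_algebraMap_smul_eq_of_mkLinearMap_eq
    (hM : ∀ s ∈ M, ∃ r ∈ T, ∃ t, algebraMap R S r = s * t) {v w : N}
    (h : mkLinearMap M N v = mkLinearMap M N w) :
    ∃ r ∈ T, algebraMap R S r • v = algebraMap R S r • w := by
  obtain ⟨u, hu⟩ := mk_eq.mp h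
  simp only [one_smul] at hu
  obtain ⟨r, hr, t, hrt⟩ := hM u u.2
  refine ⟨r, hr, ?_⟩
  rw [hrt, mul_comm, mul_smul, mul_smul]
  exact congrArg (t • ·) hu

end LocalizedModule

theorem unique_prime_over_irrelevant_maximal_ideal_general
    (A' A : Type) [CommRing A'] [CommRing A]
    [Algebra A' A]
    (𝒜' : ℕ → AddSubgroup A') [GradedRing 𝒜'] [IsLocalRing (𝒜' 0)]
    (𝒜 : ℕ → AddSubgroup A) [GradedRing 𝒜] [IsLocalRing (𝒜 0)]
    -- the inclusion `A' ⊆ A` is compatible with the gradings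
    (hcompat : ∀ (k : ℕ) (a : A'), a ∈ 𝒜' k → algebraMap A' A a ∈ 𝒜 k)
    -- `A` is a finite `A'`-module
    [Module.Finite A' A]
    (m' : Ideal A') (hm' : m' = gradedIrrelevantMaximalIdeal A' 𝒜')
    (m : Ideal A) (hm : m = gradedIrrelevantMaximalIdeal A 𝒜) :
    ∃ hp : m.IsPrime,
      -- `m̃` lies over `m̃'`
      Ideal.comap (algebraMap A' A) m = m' ∧
      -- and it is the unique prime of `A` doing so
      (∀ p : Ideal A, p.IsPrime → Ideal.comap (algebraMap A' A) p = m' → p = m) ∧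
      -- consequently, for any finitely generated `A`-module `N`, the canonical map
      -- `N → N_{m̃}` is also a localization of `N` at the multiplicative set `A' ∖ m̃'`:
      ∀ (N : Type) [AddCommGroup N] [Module A N] [Module.Finite A N],
        (∀ s : A', s ∉ m' → Function.Bijective
          (fun x : LocalizedModule (@Ideal.primeCompl A _ m hp) N =>
            algebraMap A' A s • x)) ∧
        (∀ x : LocalizedModule (@Ideal.primeCompl A _ m hp) N,
          ∃ (v : N) (s : A'), s ∉ m' ∧
            algebraMap A' A s • x =
              LocalizedModule.mkLinearMap (@Ideal.primeCompl A _ m hp) N v) ∧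
        (∀ v w : N,
          LocalizedModule.mkLinearMap (@Ideal.primeCompl A _ m hp) N v =
            LocalizedModule.mkLinearMap (@Ideal.primeCompl A _ m hp) N w →
          ∃ s : A', s ∉ m' ∧ algebraMap A' A s • v = algebraMap A' A s • w) := by
  subst hm hm'
  have hprime' := (gradedIrrelevantMaximalIdeal_isMaximal 𝒜').isPrime
  have hprime := (gradedIrrelevantMaximalIdeal_isMaximal 𝒜).isPrime
  have hcomap := comap_gradedIrrelevantMaximalIdeal hcompat
  have hunique (p : Ideal A) (_ : p.IsPrime) :=
    eq_gradedIrrelevantMaximalIdeal_of_comap_eq hcompat p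
  have hdvd : ∀ s ∈ (gradedIrrelevantMaximalIdeal A 𝒜).primeCompl,
      ∃ r ∈ (gradedIrrelevantMaximalIdeal A' 𝒜').primeCompl, ∃ t, algebraMap A' A r = s * t :=
    fun s hs => exists_algebraMap_eq_mul_of_notMem hunique hs
  refine ⟨hprime, hcomap, hunique, fun N _ _ _ => ⟨fun s hs => ?_,
    LocalizedModule.exists_algebraMap_smul_eq_mkLinearMap hdvd,
    fun v w => LocalizedModule.exists_algebraMap_smul_eq_of_mkLinearMap_eq hdvd⟩⟩
  exact LocalizedModule.bijective_smul_of_mem fun h => hs (hcomap ▸ h)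

/-- Let `A' ⊆ A` be an inclusion of commutative Noetherian rings graded by the nonnegative
integers, compatible with the gradings, such that `A'₀` and `A₀` are local rings, the
maximal ideal of `A'₀` maps into the maximal ideal of `A₀`, and `A` is finite as an
`A'`-module.  Let `m̃' ⊆ A'` (respectively `m̃ ⊆ A`) be the maximal ideal generated by the
maximal ideal of the degree-zero part together with all homogeneous elements of positive
degree.  Then `m̃` is the unique prime ideal of `A` lying over `m̃'`; consequently, for any
finitely generated `A`-module `N`, the localization of `N` at `m̃'` as an `A'`-module
coincides with its localization at `m̃` as an `A`-module (expressed below by saying that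
the canonical map `N → N_{m̃}` is a localization of `N` at the multiplicative set
`A' ∖ m̃'`, acting on `N` through `A' → A`). -/
theorem unique_prime_over_irrelevant_maximal_ideal
    (A' A : Type) [CommRing A'] [CommRing A] [IsNoetherianRing A'] [IsNoetherianRing A]
    [Algebra A' A] (hinj : Function.Injective (algebraMap A' A))
    (𝒜' : ℕ → AddSubgroup A') [GradedRing 𝒜'] [IsLocalRing (𝒜' 0)]
    (𝒜 : ℕ → AddSubgroup A) [GradedRing 𝒜] [IsLocalRing (𝒜 0)]
    -- the inclusion `A' ⊆ A` is compatible with the gradings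
    (hcompat : ∀ (k : ℕ) (a : A'), a ∈ 𝒜' k → algebraMap A' A a ∈ 𝒜 k)
    -- the maximal ideal of `A'₀` maps into the maximal ideal of `A₀`
    (hlocal : ∀ a : (𝒜' 0), a ∈ IsLocalRing.maximalIdeal (𝒜' 0) →
      (⟨algebraMap A' A a, hcompat 0 a a.2⟩ : (𝒜 0)) ∈ IsLocalRing.maximalIdeal (𝒜 0))
    -- `A` is a finite `A'`-module
    [Module.Finite A' A]
    (m' : Ideal A') (hm' : m' = gradedIrrelevantMaximalIdeal A' 𝒜')
    (m : Ideal A) (hm : m = gradedIrrelevantMaximalIdeal A 𝒜) :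
    ∃ hp : m.IsPrime,
      -- `m̃` lies over `m̃'`
      Ideal.comap (algebraMap A' A) m = m' ∧
      -- and it is the unique prime of `A` doing so
      (∀ p : Ideal A, p.IsPrime → Ideal.comap (algebraMap A' A) p = m' → p = m) ∧
      -- consequently, for any finitely generated `A`-module `N`, the canonical map
      -- `N → N_{m̃}` is also a localization of `N` at the multiplicative set `A' ∖ m̃'`:
      ∀ (N : Type) [AddCommGroup N] [Module A N] [Module.Finite A N],
        (∀ s : A', s ∉ m' → Function.Bijective
          (fun x : LocalizedModule (@Ideal.primeCompl A _ m hp) N =>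
            algebraMap A' A s • x)) ∧
        (∀ x : LocalizedModule (@Ideal.primeCompl A _ m hp) N,
          ∃ (v : N) (s : A'), s ∉ m' ∧
            algebraMap A' A s • x =
              LocalizedModule.mkLinearMap (@Ideal.primeCompl A _ m hp) N v) ∧
        (∀ v w : N,
          LocalizedModule.mkLinearMap (@Ideal.primeCompl A _ m hp) N v =
            LocalizedModule.mkLinearMap (@Ideal.primeCompl A _ m hp) N w →
          ∃ s : A', s ∉ m' ∧ algebraMap A' A s • v = algebraMap A' A s • w) :=
  unique_prime_over_irrelevant_maximal_ideal_general A' A 𝒜' 𝒜 hcompat m' hm' m hm
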